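/- Let {Y₁,…,Y_r} be smooth vector fields on ℝⁿ with r ≤ mn, and let {Ỹ₁,…,Ỹ_r} be their diagonal extensions to ℝ^{n(m+1)}. Suppose that the projections {T_qπ_m(Ỹ₁(q)), …, T_qπ_m(Ỹ_r(q))} are linearly independent for all q in an open set U ⊆ ℝ^{n(m+1)}, where π_m is the projection onto the last m blocks. If a linear combination ∑_{i=1}^r bⁱ Ỹᵢ with coefficients bⁱ ∈ C^∞(U) is again the restriction to U of a diagonal extension of some vector field on ℝⁿ, then the functions bⁱ do not depend on the first block of coordinates q₀; i.e., each bⁱ factors through π_m. -/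
import Mathlib


/-- Diagonal extension of a vector field on `ℝⁿ` to `ℝ^{n(m+1)}`. -/
def diagExt {n m : ℕ} (Y : (Fin n → ℝ) → (Fin n → ℝ)) :
    (Fin (m + 1) → Fin n → ℝ) → (Fin (m + 1) → Fin n → ℝ) :=
  fun q a => Y (q a)

/-- Lemma 1: if the projections `Tπ_m(Ỹᵢ)` of the diagonal extensions are pointwise linearly
independent on an open set `U`, and a combination `∑ bⁱ Ỹᵢ` with `bⁱ ∈ C^∞(U)` is again (the
restriction to `U` of) a diagonal extension, then the `bⁱ` do not depend on the first block of
coordinates `q₀`, i.e. each `bⁱ` factors through `π_m` on `U`. -/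
theorem stmt3 {n m r : ℕ} (hr : r ≤ m * n)
    (Y : Fin r → ((Fin n → ℝ) → (Fin n → ℝ)))
    (hY : ∀ i, ContDiff ℝ (⊤ : ℕ∞) (Y i))
    (U : Set (Fin (m + 1) → Fin n → ℝ)) (hU : IsOpen U)
    (hindep : ∀ q ∈ U,
      LinearIndependent ℝ (fun i : Fin r => (fun a : Fin m => Y i (q a.succ))))
    (b : Fin r → (Fin (m + 1) → Fin n → ℝ) → ℝ)
    (hb : ∀ i, ContDiffOn ℝ (⊤ : ℕ∞) (b i) U)
    (Z : (Fin n → ℝ) → (Fin n → ℝ))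
    (hcomb : ∀ q ∈ U, (∑ i, b i q • diagExt (m := m) (Y i) q) = diagExt (m := m) Z q) :
    ∀ q ∈ U, ∀ q' ∈ U, (∀ a : Fin m, q a.succ = q' a.succ) → ∀ i, b i q = b i q' := by
  intro q hq q' hq' hqq' i
  have h1 := hcomb q hq
  have h2 := hcomb q' hq'
  have key : ∑ j, (b j q - b j q') • (fun a : Fin m => Y j (q a.succ))
      = (0 : Fin m → Fin n → ℝ) := by
    funext a
    have e1 := congrFun h1 a.succ
    have e2 := congrFun h2 a.succ
    simp only [diagExt, Finset.sum_apply, Pi.smul_apply] at e1 e2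
    rw [hqq' a] at e1
    simp only [Finset.sum_apply, Pi.sub_apply, Pi.smul_apply, Pi.zero_apply, sub_smul,
      Finset.sum_sub_distrib, hqq' a, e1, e2, sub_self]
  have := Fintype.linearIndependent_iff.mp (hindep q hq)
    (fun j => b j q - b j q') key i
  linarith
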